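/- (Main theorem) Let A be the ℝ-algebra of functions on ℝᵈ generated by the coordinate functions x₁,...,x_d and Borel measurable functions h₁,...,h_m. Let Q ⊆ A be a countably generated archimedean quadratic module possessing the moment property: every linear functional on A nonnegative on Q is represented by a positive Borel measure supported in P(Q). If f ∈ A satisfies f(x) > 0 for all x ∈ P(Q), then f ∈ Q. -/

import Mathlib

/-!
If `f ∉ Q`, the archimedean property makes `1` an order unit of the convex cone `Q`, so the
Riesz extension theorem, applied to the cone `Q + ℝ≥0 • (-f)`, yields a linear functional
`L ≥ 0` on `Q` with `L 1 = 1` and `L f ≤ 0`. The moment property represents `L` by a nonzero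
measure carried by `P(Q)`, where `f > 0`; hence `L f = ∫ f dμ > 0`, a contradiction.
-/

open MeasureTheory

namespace PointedCone

variable {E : Type*} [AddCommGroup E] [Module ℝ E] {C : PointedCone ℝ E} {e f : E}

def IsOrderUnit (C : PointedCone ℝ E) (e : E) : Prop :=
  ∀ y, ∃ r : ℝ, 0 ≤ r ∧ r • e + y ∈ C

theorem IsOrderUnit.mem (he : C.IsOrderUnit e) : e ∈ C := by
  obtain ⟨r, hr, hmem⟩ := he e
  have : (r + 1) • e ∈ C := by rwa [add_smul, one_smul]
  exact (C.smul_mem_iff (by positivity)).1 this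

theorem IsOrderUnit.eq_top_of_neg_mem (he : C.IsOrderUnit e) (hneg : -e ∈ C) : C = ⊤ := by
  refine eq_top_iff.2 fun y _ => ?_
  obtain ⟨r, hr, hmem⟩ := he y
  simpa using C.add_mem hmem (C.smul_mem hr hneg)

theorem IsOrderUnit.nonneg_of_smul_add_smul_mem (he : C.IsOrderUnit e) (hf : f ∉ C)
    {α t : ℝ} (ht : 0 ≤ t) (hmem : α • e + t • f ∈ C) : 0 ≤ α := by
  by_contra! hα
  rcases ht.eq_or_lt with rfl | ht
  · have hneg := C.smul_mem (inv_nonneg.2 (neg_nonneg.2 hα.le)) hmem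
    rw [zero_smul, add_zero, smul_smul, inv_neg, neg_mul, inv_mul_cancel₀ hα.ne, neg_smul,
      one_smul] at hneg
    exact hf (he.eq_top_of_neg_mem hneg ▸ Submodule.mem_top)
  · have : t⁻¹ • (α • e + t • f) + (t⁻¹ * -α) • e = f := by
      rw [smul_add, smul_smul, smul_smul, inv_mul_cancel₀ ht.ne', one_smul, mul_neg, neg_smul,
        add_neg_cancel_comm]
    exact hf (this ▸ C.add_mem (C.smul_mem (by positivity) hmem)
      (C.smul_mem (mul_nonneg (inv_nonneg.2 ht.le) (neg_nonneg.2 hα.le)) he.mem))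

theorem IsOrderUnit.ne_zero (he : C.IsOrderUnit e) (hf : f ∉ C) : e ≠ 0 := by
  rintro rfl
  exact hf (he.eq_top_of_neg_mem (by simp) ▸ Submodule.mem_top)

theorem IsOrderUnit.exists_linearMap_nonneg_of_notMem (he : C.IsOrderUnit e) (hf : f ∉ C) :
    ∃ L : E →ₗ[ℝ] ℝ, (∀ x ∈ C, 0 ≤ L x) ∧ L e = 1 ∧ L f ≤ 0 := by
  set L₀ : E →ₗ.[ℝ] ℝ := LinearPMap.mkSpanSingleton e 1 (he.ne_zero hf)
  have nonneg : ∀ x : L₀.domain, (x : E) ∈ C ⊔ PointedCone.hull ℝ {-f} → 0 ≤ L₀ x := by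
    rintro ⟨x, hx⟩ hxD
    obtain ⟨α, rfl⟩ := Submodule.mem_span_singleton.1 hx
    obtain ⟨y, hy, z, hz, hyz⟩ := Submodule.mem_sup.1 hxD
    obtain ⟨t, rfl⟩ := Submodule.mem_span_singleton.1 hz
    have hy' : α • e + (t : ℝ) • f = y := by
      change y + (t : ℝ) • -f = α • e at hyz
      rw [← hyz, smul_neg]
      abel
    have hα := he.nonneg_of_smul_add_smul_mem hf t.2 (hy' ▸ hy)
    rwa [LinearPMap.mkSpanSingleton'_apply, smul_eq_mul, mul_one]
  have dense : ∀ y, ∃ x : L₀.domain, (x : E) + y ∈ C ⊔ PointedCone.hull ℝ {-f} := by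
    intro y
    obtain ⟨r, -, hr⟩ := he y
    exact ⟨⟨r • e, Submodule.smul_mem _ _ (Submodule.mem_span_singleton_self e)⟩,
      Submodule.mem_sup_left hr⟩
  obtain ⟨L, hLe, hLD⟩ := riesz_extension _ L₀ nonneg dense
  refine ⟨L, fun x hx => hLD x (Submodule.mem_sup_left hx), ?_, ?_⟩
  · rw [hLe ⟨e, Submodule.mem_span_singleton_self e⟩, LinearPMap.mkSpanSingleton_apply]
  · simpa using hLD (-f) (Submodule.mem_sup_right (Submodule.subset_span rfl))

end PointedCone

structure IsQuadraticModule {R : Type*} [Ring R] (Q : Set R) : Prop where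
  add_mem : ∀ a b : R, a ∈ Q → b ∈ Q → a + b ∈ Q
  one_mem : (1 : R) ∈ Q
  sq_mul_mem : ∀ a q : R, q ∈ Q → a ^ 2 * q ∈ Q

namespace IsQuadraticModule

variable {R : Type*} [Ring R] [Algebra ℝ R] {Q : Set R}

theorem smul_mem (hQ : IsQuadraticModule Q) {c : ℝ} (hc : 0 ≤ c) {q : R} (hq : q ∈ Q) :
    c • q ∈ Q := by
  have h := hQ.sq_mul_mem (Real.sqrt c • 1) q hq
  rwa [smul_pow, one_pow, Real.sq_sqrt hc, smul_mul_assoc, one_mul] at h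

def toPointedCone (hQ : IsQuadraticModule Q) : PointedCone ℝ R where
  carrier := Q
  add_mem' := hQ.add_mem _ _
  zero_mem' := by simpa using hQ.smul_mem le_rfl hQ.one_mem
  smul_mem' c := hQ.smul_mem c.2

theorem isOrderUnit_one (hQ : IsQuadraticModule Q)
    (harch : ∀ f : R, ∃ ε > (0 : ℝ), ∀ t : ℝ, 0 ≤ t → t ≤ ε → (1 : R) + t • f ∈ Q) :
    hQ.toPointedCone.IsOrderUnit 1 := by
  intro y
  obtain ⟨ε, hε, h⟩ := harch y
  refine ⟨ε⁻¹, by positivity, ?_⟩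
  have := hQ.smul_mem (inv_nonneg.2 hε.le) (h ε hε.le le_rfl)
  rwa [smul_add, smul_smul, inv_mul_cancel₀ hε.ne', one_smul] at this

end IsQuadraticModule

theorem integral_pos_of_ae_pos {X : Type*} [MeasurableSpace X] {μ : Measure X} [NeZero μ]
    {f : X → ℝ} (hf : ∀ᵐ x ∂μ, 0 < f x) (hfi : Integrable f μ) : 0 < ∫ x, f x ∂μ := by
  refine (integral_pos_iff_support_of_nonneg_ae (hf.mono fun _ => le_of_lt) hfi).2 ?_
  have hsupp : Function.support f =ᵐ[μ] Set.univ :=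
    ae_eq_univ.2 (ae_iff.1 (hf.mono fun _ => ne_of_gt))
  rw [measure_congr hsupp]
  exact Measure.measure_univ_pos.2 (NeZero.ne μ)

theorem measurable_striktpositivstellensatz_general {d : ℕ}
    (A : Subalgebra ℝ ((Fin d → ℝ) → ℝ))
    (Q : Set A)
    -- `Q` is a quadratic module:
    (hadd : ∀ a b : A, a ∈ Q → b ∈ Q → a + b ∈ Q)
    (hone : (1 : A) ∈ Q)
    (hsq : ∀ a q : A, q ∈ Q → a ^ 2 * q ∈ Q)
    -- `Q` is archimedean:
    (harch : ∀ f : A, ∃ ε > (0:ℝ), ∀ t : ℝ, 0 ≤ t → t ≤ ε →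
        (1 : A) + t • f ∈ Q)
    -- `Q` has the moment property: every linear functional nonnegative on `Q`
    -- is represented by a positive Borel measure supported in `P(Q)`:
    (hmom : ∀ L : A →ₗ[ℝ] ℝ, (∀ q ∈ Q, 0 ≤ L q) →
      ∃ μ : Measure (Fin d → ℝ),
        μ {x : Fin d → ℝ | ∀ q ∈ Q, 0 ≤ (q : (Fin d → ℝ) → ℝ) x}ᶜ = 0 ∧
        ∀ g : A, Integrable (g : (Fin d → ℝ) → ℝ) μ ∧
          L g = ∫ x, (g : (Fin d → ℝ) → ℝ) x ∂μ)
    (f : A)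
    (hf : ∀ x ∈ {x : Fin d → ℝ | ∀ q ∈ Q, 0 ≤ (q : (Fin d → ℝ) → ℝ) x},
        0 < (f : (Fin d → ℝ) → ℝ) x) :
    f ∈ Q := by
  by_contra hfQ
  have hQ : IsQuadraticModule Q := ⟨hadd, hone, hsq⟩
  obtain ⟨L, hLQ, hL1, hLf⟩ :=
    (hQ.isOrderUnit_one harch).exists_linearMap_nonneg_of_notMem hfQ
  obtain ⟨μ, hμP, hμL⟩ := hmom L hLQ
  have : NeZero μ := ⟨by rintro rfl; simpa [hL1] using (hμL 1).2⟩
  have hfpos : ∀ᵐ x ∂μ, 0 < (f : (Fin d → ℝ) → ℝ) x :=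
    measure_mono_null (fun x hx => mt (hf x) hx) hμP
  have := integral_pos_of_ae_pos hfpos (hμL f).1
  linarith [(hμL f).2]

/-- **Main theorem** (Putinar, Striktpositivstellensatz for measurable
functions). Let `A = ℝ[x₁,…,x_d,h₁,…,h_m]` be the algebra of functions on ℝᵈ
generated by the coordinate functions and Borel measurable functions
`h₁,…,h_m`. Let `Q ⊆ A` be a countably generated archimedean quadratic module
with the moment property. If `f ∈ A` is (strictly) positive on `P(Q)`, then
`f ∈ Q`. -/
theorem measurable_striktpositivstellensatz {d m : ℕ}
    (h : Fin m → (Fin d → ℝ) → ℝ) (hh : ∀ j, Measurable (h j))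
    (A : Subalgebra ℝ ((Fin d → ℝ) → ℝ))
    (hA : A = Algebra.adjoin ℝ
      ((Set.range fun i : Fin d => fun x : Fin d → ℝ => x i) ∪ Set.range h))
    (Q : Set A)
    -- `Q` is a quadratic module:
    (hadd : ∀ a b : A, a ∈ Q → b ∈ Q → a + b ∈ Q)
    (hone : (1 : A) ∈ Q)
    (hsq : ∀ a q : A, q ∈ Q → a ^ 2 * q ∈ Q)
    -- `Q` is countably generated:
    (hgen : ∃ g : ℕ → A, Q = ⋂₀ {M : Set A |
        (∀ a b : A, a ∈ M → b ∈ M → a + b ∈ M) ∧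
        (1 : A) ∈ M ∧
        (∀ a q : A, q ∈ M → a ^ 2 * q ∈ M) ∧
        (∀ n, g n ∈ M)})
    -- `Q` is archimedean:
    (harch : ∀ f : A, ∃ ε > (0:ℝ), ∀ t : ℝ, 0 ≤ t → t ≤ ε →
        (1 : A) + t • f ∈ Q)
    -- `Q` has the moment property: every linear functional nonnegative on `Q`
    -- is represented by a positive Borel measure supported in `P(Q)`:
    (hmom : ∀ L : A →ₗ[ℝ] ℝ, (∀ q ∈ Q, 0 ≤ L q) →
      ∃ μ : Measure (Fin d → ℝ),
        μ {x : Fin d → ℝ | ∀ q ∈ Q, 0 ≤ (q : (Fin d → ℝ) → ℝ) x}ᶜ = 0 ∧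
        ∀ g : A, Integrable (g : (Fin d → ℝ) → ℝ) μ ∧
          L g = ∫ x, (g : (Fin d → ℝ) → ℝ) x ∂μ)
    (f : A)
    (hf : ∀ x ∈ {x : Fin d → ℝ | ∀ q ∈ Q, 0 ≤ (q : (Fin d → ℝ) → ℝ) x},
        0 < (f : (Fin d → ℝ) → ℝ) x) :
    f ∈ Q :=
  measurable_striktpositivstellensatz_general A Q hadd hone hsq harch hmom f hf
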